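/- Let H₁, H₂ ∈ (1/2, 1), a > 0, and set c_{a,h} = a^{−h/2} Γ(h/2). Then for every x ∈ ℝ, ∫_ℝ ( ∫₀¹ K_{H₁,H₂}(s,x,y) ds ) e^{a y} 𝟙{y ≤ 1} dy = ∫₀¹ ( c_{a,H₂} (s − x)₊^{H₁/2 − 1} + c_{a,H₁} (s − x)₊^{H₂/2 − 1} ) e^{a s} ds, and both sides are finite. -/

import Mathlib

open MeasureTheory Set

/-!
For fixed `s`, the substitution `u = s - y` turns `∫ (s - y)₊^{h/2-1} e^{ay} dy` into
`e^{as} ∫₀^∞ u^{h/2-1} e^{-au} du = e^{as} a^{-h/2} Γ(h/2)`, and for `s ≤ 1` the cut-off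
`𝟙{y ≤ 1}` is invisible because the kernel already vanishes for `y ≥ s`. Integrating first in `y`
thus yields the right-hand side, which is finite since `(s - x)₊^{H/2-1}` is locally integrable for
`H > 0`. As the integrand is nonnegative, this finiteness makes it integrable on the product, and
Fubini exchanges the two integrations.
-/

/-- `u₊^p`: equals `u ^ p` (real power) if `u > 0`, and `0` otherwise. -/
noncomputable def plusPow (u p : ℝ) : ℝ := if 0 < u then u ^ p else 0

/-- The kernel `K_{H₁,H₂}(s,x,y)` of the generalized Rosenblatt process. -/
noncomputable def rosenblattK (H₁ H₂ s x y : ℝ) : ℝ :=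
  plusPow (s - x) (H₁ / 2 - 1) * plusPow (s - y) (H₂ / 2 - 1) +
  plusPow (s - x) (H₂ / 2 - 1) * plusPow (s - y) (H₁ / 2 - 1)

/-- `c_{a,h} = a^{-h/2} Γ(h/2)`. -/
noncomputable def cahConst (a h : ℝ) : ℝ := a ^ (-(h / 2)) * Real.Gamma (h / 2)

theorem integral_integral_swap_of_nonneg {α β : Type*} [MeasurableSpace α] [MeasurableSpace β]
    {μ : Measure α} {ν : Measure β} [SFinite μ] [SFinite ν] {f : α → β → ℝ}
    (hf : AEStronglyMeasurable (Function.uncurry f) (μ.prod ν)) (hf_nonneg : ∀ x y, 0 ≤ f x y)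
    (hf_sections : ∀ᵐ x ∂μ, Integrable (f x) ν)
    (hf_integral : Integrable (fun x => ∫ y, f x y ∂ν) μ) :
    Integrable (fun y => ∫ x, f x y ∂μ) ν ∧ ∫ y, ∫ x, f x y ∂μ ∂ν = ∫ x, ∫ y, f x y ∂ν ∂μ := by
  have hprod : Integrable (Function.uncurry f) (μ.prod ν) := by
    refine (integrable_prod_iff hf).2 ⟨hf_sections, hf_integral.congr (ae_of_all _ fun x => ?_)⟩
    simp only [Function.uncurry_apply_pair, Real.norm_of_nonneg (hf_nonneg _ _)]
  exact ⟨hprod.integral_prod_right, (integral_integral_swap hprod).symm⟩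

theorem plusPow_of_nonpos {u : ℝ} (hu : u ≤ 0) (p : ℝ) : plusPow u p = 0 :=
  if_neg hu.not_gt

theorem plusPow_nonneg (u p : ℝ) : 0 ≤ plusPow u p := by
  unfold plusPow
  split_ifs with hu
  exacts [Real.rpow_nonneg hu.le p, le_rfl]

theorem plusPow_mul_eq_indicator (p : ℝ) (g : ℝ → ℝ) :
    (fun u => plusPow u p * g u) = (Ioi 0).indicator fun u => u ^ p * g u := by
  ext u
  by_cases hu : 0 < u <;> simp [plusPow, hu]

@[fun_prop]
theorem measurable_plusPow (p : ℝ) : Measurable (plusPow · p) :=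
  Measurable.ite measurableSet_Ioi (by fun_prop) measurable_const

theorem intervalIntegrable_plusPow_sub {p : ℝ} (hp : 0 < p) (x b c : ℝ) :
    IntervalIntegrable (fun s => plusPow (s - x) (p - 1)) volume b c := by
  have h : IntervalIntegrable (plusPow · (p - 1)) volume (b - x) (c - x) := by
    refine (intervalIntegral.intervalIntegrable_rpow' (by linarith : -1 < p - 1)).mono_fun
      (measurable_plusPow _).aestronglyMeasurable (ae_of_all _ fun u => ?_)
    by_cases hu : 0 < u <;> simp [plusPow, hu]
  simpa using h.comp_sub_right x

theorem integrable_plusPow_mul_exp_neg {a p : ℝ} (ha : 0 < a) (hp : 0 < p) :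
    Integrable fun u => plusPow u (p - 1) * Real.exp (-(a * u)) := by
  rw [plusPow_mul_eq_indicator _ fun u => Real.exp (-(a * u)),
    integrable_indicator_iff measurableSet_Ioi]
  simpa using integrableOn_rpow_mul_exp_neg_mul_rpow (by linarith : -1 < p - 1) one_pos ha

theorem integral_plusPow_mul_exp_neg {a p : ℝ} (ha : 0 < a) (hp : 0 < p) :
    ∫ u, plusPow u (p - 1) * Real.exp (-(a * u)) = a ^ (-p) * Real.Gamma p := by
  rw [plusPow_mul_eq_indicator _ fun u => Real.exp (-(a * u)), integral_indicator measurableSet_Ioi,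
    Real.integral_rpow_mul_exp_neg_mul_Ioi hp ha,
    one_div, Real.inv_rpow ha.le, Real.rpow_neg ha.le]

theorem plusPow_sub_mul_exp (a p s y : ℝ) :
    plusPow (s - y) p * Real.exp (a * y) =
      Real.exp (a * s) * (plusPow (s - y) p * Real.exp (-(a * (s - y)))) := by
  rw [mul_left_comm, ← Real.exp_add]
  ring_nf

theorem integrable_plusPow_sub_mul_exp {a p : ℝ} (ha : 0 < a) (hp : 0 < p) (s : ℝ) :
    Integrable fun y => plusPow (s - y) (p - 1) * Real.exp (a * y) := by
  simp only [plusPow_sub_mul_exp a _ s]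
  exact ((integrable_plusPow_mul_exp_neg ha hp).comp_sub_left s).const_mul _

theorem integral_plusPow_sub_mul_exp {a p : ℝ} (ha : 0 < a) (hp : 0 < p) (s : ℝ) :
    ∫ y, plusPow (s - y) (p - 1) * Real.exp (a * y) =
      Real.exp (a * s) * (a ^ (-p) * Real.Gamma p) := by
  simp only [plusPow_sub_mul_exp a _ s]
  rw [integral_const_mul,
    integral_sub_left_eq_self (fun u => plusPow u (p - 1) * Real.exp (-(a * u))),
    integral_plusPow_mul_exp_neg ha hp]

theorem rosenblattK_nonneg (H₁ H₂ s x y : ℝ) : 0 ≤ rosenblattK H₁ H₂ s x y := by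
  unfold rosenblattK
  exact add_nonneg (mul_nonneg (plusPow_nonneg _ _) (plusPow_nonneg _ _))
    (mul_nonneg (plusPow_nonneg _ _) (plusPow_nonneg _ _))

theorem rosenblattK_of_le {s y : ℝ} (hsy : s ≤ y) (H₁ H₂ x : ℝ) :
    rosenblattK H₁ H₂ s x y = 0 := by
  simp [rosenblattK, plusPow_of_nonpos (sub_nonpos.2 hsy)]

theorem rosenblattK_mul_exp (H₁ H₂ a s x y : ℝ) :
    rosenblattK H₁ H₂ s x y * Real.exp (a * y) =
      plusPow (s - x) (H₁ / 2 - 1) * (plusPow (s - y) (H₂ / 2 - 1) * Real.exp (a * y)) +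
      plusPow (s - x) (H₂ / 2 - 1) * (plusPow (s - y) (H₁ / 2 - 1) * Real.exp (a * y)) := by
  rw [rosenblattK]
  ring

theorem integrable_rosenblattK_mul_exp {H₁ H₂ a : ℝ} (hH₁ : 0 < H₁) (hH₂ : 0 < H₂) (ha : 0 < a)
    (s x : ℝ) : Integrable fun y => rosenblattK H₁ H₂ s x y * Real.exp (a * y) := by
  simp only [rosenblattK_mul_exp]
  exact ((integrable_plusPow_sub_mul_exp ha (half_pos hH₂) s).const_mul _).add
    ((integrable_plusPow_sub_mul_exp ha (half_pos hH₁) s).const_mul _)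

theorem integral_rosenblattK_mul_exp {H₁ H₂ a : ℝ} (hH₁ : 0 < H₁) (hH₂ : 0 < H₂) (ha : 0 < a)
    (s x : ℝ) :
    ∫ y, rosenblattK H₁ H₂ s x y * Real.exp (a * y) =
      (cahConst a H₂ * plusPow (s - x) (H₁ / 2 - 1) +
        cahConst a H₁ * plusPow (s - x) (H₂ / 2 - 1)) * Real.exp (a * s) := by
  simp only [rosenblattK_mul_exp]
  rw [integral_add ((integrable_plusPow_sub_mul_exp ha (half_pos hH₂) s).const_mul _)
      ((integrable_plusPow_sub_mul_exp ha (half_pos hH₁) s).const_mul _),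
    integral_const_mul, integral_const_mul, integral_plusPow_sub_mul_exp ha (half_pos hH₂),
    integral_plusPow_sub_mul_exp ha (half_pos hH₁), cahConst, cahConst]
  ring

theorem rosenblattK_mul_exp_mul_ite_of_le {s t : ℝ} (hst : s ≤ t) (H₁ H₂ a x y : ℝ) :
    rosenblattK H₁ H₂ s x y * Real.exp (a * y) * (if y ≤ t then 1 else 0) =
      rosenblattK H₁ H₂ s x y * Real.exp (a * y) := by
  split_ifs with hyt
  · exact mul_one _
  · rw [rosenblattK_of_le (hst.trans (not_le.1 hyt).le), zero_mul, zero_mul]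

theorem measurable_rosenblattK_mul_exp_mul_ite (H₁ H₂ a x t : ℝ) :
    Measurable fun z : ℝ × ℝ =>
      rosenblattK H₁ H₂ z.1 x z.2 * Real.exp (a * z.2) * (if z.2 ≤ t then 1 else 0) := by
  refine Measurable.mul ?_
    (Measurable.ite (measurableSet_le measurable_snd measurable_const) measurable_const
      measurable_const)
  unfold rosenblattK
  fun_prop

theorem intervalIntegrable_cahConst_plusPow_mul_exp {H₁ H₂ : ℝ} (hH₁ : 0 < H₁) (hH₂ : 0 < H₂)
    (a x b c : ℝ) :
    IntervalIntegrable (fun s =>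
      (cahConst a H₂ * plusPow (s - x) (H₁ / 2 - 1) +
        cahConst a H₁ * plusPow (s - x) (H₂ / 2 - 1)) * Real.exp (a * s)) volume b c :=
  (((intervalIntegrable_plusPow_sub (half_pos hH₁) x b c).const_mul _).add
    ((intervalIntegrable_plusPow_sub (half_pos hH₂) x b c).const_mul _)).mul_continuousOn
    (by fun_prop)

/-- The image of the test function `f_a(y) = e^{ay} 𝟙{y ≤ 1}` under the integral operator
with kernel `φ(x,y) = ∫₀¹ K_{H₁,H₂}(s,x,y) ds`, with finiteness of both sides. -/
theorem operator_on_test_function (H₁ H₂ : ℝ) (hH₁ : H₁ ∈ Set.Ioo (1/2 : ℝ) 1)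
    (hH₂ : H₂ ∈ Set.Ioo (1/2 : ℝ) 1) (a : ℝ) (ha : 0 < a) (x : ℝ) :
    Integrable (fun y : ℝ =>
      (∫ s in (0:ℝ)..1, rosenblattK H₁ H₂ s x y) * Real.exp (a * y) *
        (if y ≤ 1 then (1:ℝ) else 0)) ∧
    IntervalIntegrable (fun s : ℝ =>
      (cahConst a H₂ * plusPow (s - x) (H₁ / 2 - 1) +
       cahConst a H₁ * plusPow (s - x) (H₂ / 2 - 1)) * Real.exp (a * s))
      MeasureTheory.volume 0 1 ∧
    (∫ y : ℝ, (∫ s in (0:ℝ)..1, rosenblattK H₁ H₂ s x y) * Real.exp (a * y) *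
        (if y ≤ 1 then (1:ℝ) else 0))
      = ∫ s in (0:ℝ)..1,
          (cahConst a H₂ * plusPow (s - x) (H₁ / 2 - 1) +
           cahConst a H₁ * plusPow (s - x) (H₂ / 2 - 1)) * Real.exp (a * s) := by
  have hH₁ : 0 < H₁ := by linarith [hH₁.1]
  have hH₂ : 0 < H₂ := by linarith [hH₂.1]
  set F : ℝ → ℝ → ℝ := fun s y =>
    rosenblattK H₁ H₂ s x y * Real.exp (a * y) * (if y ≤ 1 then 1 else 0)
  have hF_section : ∀ s ∈ Ioc (0 : ℝ) 1,
      F s = fun y => rosenblattK H₁ H₂ s x y * Real.exp (a * y) := fun s hs =>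
    funext (rosenblattK_mul_exp_mul_ite_of_le hs.2 H₁ H₂ a x)
  have hF_integral : ∀ s ∈ Ioc (0 : ℝ) 1, ∫ y, F s y =
      (cahConst a H₂ * plusPow (s - x) (H₁ / 2 - 1) +
       cahConst a H₁ * plusPow (s - x) (H₂ / 2 - 1)) * Real.exp (a * s) := fun s hs => by
    rw [hF_section s hs, integral_rosenblattK_mul_exp hH₁ hH₂ ha]
  have hRHS := intervalIntegrable_cahConst_plusPow_mul_exp hH₁ hH₂ a x 0 1
  obtain ⟨h_int, h_swap⟩ := integral_integral_swap_of_nonneg (f := F)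
    (measurable_rosenblattK_mul_exp_mul_ite H₁ H₂ a x 1).aestronglyMeasurable
    (fun s y => mul_nonneg (mul_nonneg (rosenblattK_nonneg ..) (Real.exp_pos _).le)
      (by split_ifs <;> norm_num))
    (by
      filter_upwards [ae_restrict_mem measurableSet_Ioc] with s hs
      rw [hF_section s hs]
      exact integrable_rosenblattK_mul_exp hH₁ hH₂ ha s x)
    (((intervalIntegrable_iff_integrableOn_Ioc_of_le zero_le_one).1 hRHS).congr_fun
      (fun s hs => (hF_integral s hs).symm) measurableSet_Ioc)
  have hLHS : ∀ y, (∫ s in (0:ℝ)..1, rosenblattK H₁ H₂ s x y) * Real.exp (a * y) *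
      (if y ≤ 1 then (1:ℝ) else 0) = ∫ s in Ioc 0 1, F s y := fun y => by
    rw [intervalIntegral.integral_of_le zero_le_one, integral_mul_const, integral_mul_const]
  simp only [hLHS]
  refine ⟨h_int, hRHS, ?_⟩
  rw [h_swap, intervalIntegral.integral_of_le zero_le_one]
  exact setIntegral_congr_fun measurableSet_Ioc hF_integral
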